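/- Let (M, 𝒜) be an uncertainty matroid on a finite ground set E, let e ∈ E be a colored uncertain element, and let f ∈ E − e. (i) If e is blue and f is blue (resp. red) in (M, 𝒜), then f is blue (resp. red) in (M/e, 𝒜|_{E−e}). (ii) If e is red and f is blue (resp. red) in (M, 𝒜), then f is blue (resp. red) in (M\e, 𝒜|_{E−e}). -/

import Mathlib

open Matroid

variable {α : Type*}

/-- `A` is an uncertainty area function for `M`: each element of the ground set gets a
nonempty bounded set of reals. -/
def IsAreaFun (M : Matroid α) (A : α → Set ℝ) : Prop :=
  ∀ e ∈ M.E, (A e).Nonempty ∧ BddBelow (A e) ∧ BddAbove (A e)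

/-- A realization: a weight function with `w e ∈ A e` for every element of the ground set. -/
def Realization (M : Matroid α) (A : α → Set ℝ) (w : α → ℝ) : Prop :=
  ∀ e ∈ M.E, w e ∈ A e

/-- The total `w`-weight of a set. -/
noncomputable def setWeight (w : α → ℝ) (T : Set α) : ℝ := ∑ᶠ e ∈ T, w e

/-- A `w`-basis: a basis of `M` of minimum total `w`-weight. -/
def IsMinBasis (M : Matroid α) (w : α → ℝ) (T : Set α) : Prop :=
  M.IsBase T ∧ ∀ B, M.IsBase B → setWeight w T ≤ setWeight w B

/-- A uniformly optimal basis (an `A`-basis): a `w`-basis for every realization `w`. -/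
def IsUOB (M : Matroid α) (A : α → Set ℝ) (T : Set α) : Prop :=
  ∀ w, Realization M A w → IsMinBasis M w T

/-- An element is certain if its area is a singleton. -/
def Certain (A : α → Set ℝ) (e : α) : Prop := ∃ r : ℝ, A e = {r}

/-- `e` is blue if every realization admits a minimum weight basis containing `e`. -/
def Blue (M : Matroid α) (A : α → Set ℝ) (e : α) : Prop :=
  ∀ w, Realization M A w → ∃ T, IsMinBasis M w T ∧ e ∈ T

/-- `e` is red if every realization admits a minimum weight basis avoiding `e`. -/
def Red (M : Matroid α) (A : α → Set ℝ) (e : α) : Prop :=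
  ∀ w, Realization M A w → ∃ T, IsMinBasis M w T ∧ e ∉ T

/-- `e` is colored if it is blue or red. -/
def Colored (M : Matroid α) (A : α → Set ℝ) (e : α) : Prop :=
  Blue M A e ∨ Red M A e

/-- Deletion of a set of elements from a matroid. -/
def Matroid.del (M : Matroid α) (D : Set α) : Matroid α := M ↾ (M.E \ D)

/-- Contraction of a set of elements in a matroid, defined by duality. -/
def Matroid.con (M : Matroid α) (C : Set α) : Matroid α := (M✶.del C)✶

/-!
Fix a realization `w` of the minor and two values `a < b` in the area of `e`, and extend `w` to
`M` by giving `e` the weight `a` or `b`. Raising the weight of `e` only makes bases containing `e`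
heavier, so if some `w[e ↦ b]`-basis contains `e`, every `w[e ↦ a]`-basis does too. Hence
when `e` is blue, the `w[e ↦ a]`-basis witnessing the color of `f` contains `e`, and removing `e`
from it gives a `w`-basis of `M ／ e`; when `e` is red, the `w[e ↦ b]`-basis witnessing the color
of `f` avoids `e` and is itself a `w`-basis of `M ＼ e`.
-/

open Set Function

lemma Matroid.con_eq_contract (M : Matroid α) (C : Set α) : M.con C = M ／ C := rfl

lemma Matroid.del_eq_delete (M : Matroid α) (D : Set α) : M.del D = M ＼ D := rfl

lemma exists_lt_of_not_certain {A : α → Set ℝ} {e : α} (hne : (A e).Nonempty)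
    (hu : ¬ Certain A e) : ∃ a ∈ A e, ∃ b ∈ A e, a < b :=
  nontrivial_iff_exists_lt.1 (hne.exists_eq_singleton_or_nontrivial.resolve_left hu)

lemma Realization.update_of_ground_eq [DecidableEq α] {M N : Matroid α} {A : α → Set ℝ}
    {w : α → ℝ} {e : α} {c : ℝ} (hw : Realization N A w) (hN : N.E = M.E \ {e})
    (hc : c ∈ A e) :
    Realization M A (update w e c) := by
  intro x hx
  obtain rfl | hxe := eq_or_ne x e
  · simpa using hc
  · simpa [hxe] using hw x (hN ▸ ⟨hx, hxe⟩)

section setWeight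

variable [DecidableEq α] {w : α → ℝ} {T : Set α} {e : α} {c : ℝ}

lemma setWeight_update_of_notMem (he : e ∉ T) : setWeight (update w e c) T = setWeight w T :=
  finsum_mem_congr rfl fun _ hx ↦ update_of_ne (ne_of_mem_of_not_mem hx he) c w

lemma setWeight_update_of_mem (hT : T.Finite) (he : e ∈ T) :
    setWeight (update w e c) T = c + setWeight w (T \ {e}) := by
  rw [setWeight, ← insert_sdiff_self_of_mem he, finsum_mem_insert _ (by simp) hT.sdiff,
    insert_sdiff_self_of_mem he, update_self]
  exact congrArg _ (setWeight_update_of_notMem (by simp))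

end setWeight

section IsMinBasis

variable [DecidableEq α] {M : Matroid α} {w : α → ℝ} {T T' : Set α} {e : α} {a b c : ℝ}

lemma IsMinBasis.mem_of_update_lt (hE : M.E.Finite) (hab : a < b)
    (hT : IsMinBasis M (update w e a) T) (hT' : IsMinBasis M (update w e b) T') (he : e ∈ T') :
    e ∈ T := by
  by_contra heT
  have hT'_fin : T'.Finite := hE.subset hT'.1.subset_ground
  have hTa := hT.2 T' hT'.1
  have hT'b := hT'.2 T hT.1
  rw [setWeight_update_of_notMem heT] at hTa hT'b
  rw [setWeight_update_of_mem hT'_fin he] at hTa hT'b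
  linarith

lemma IsMinBasis.contractElem (hE : M.E.Finite) (hT : IsMinBasis M (update w e c) T)
    (he : e ∈ T) : IsMinBasis (M ／ {e}) w (T \ {e}) := by
  have hI : M.Indep {e} := hT.1.indep.subset (singleton_subset_iff.2 he)
  have hTe : T \ {e} ∪ {e} = T := sdiff_union_of_subset (singleton_subset_iff.2 he)
  refine ⟨hI.contract_isBase_iff.2 ⟨by rw [hTe]; exact hT.1, disjoint_sdiff_left⟩,
    fun B hB ↦ ?_⟩
  obtain ⟨hBe, hdisj⟩ := hI.contract_isBase_iff.1 hB
  have hBe_fin : (B ∪ {e}).Finite := hE.subset hBe.subset_ground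
  have hle := hT.2 _ hBe
  rwa [setWeight_update_of_mem (hE.subset hT.1.subset_ground) he,
    setWeight_update_of_mem hBe_fin (mem_union_right _ rfl), union_sdiff_right,
    hdisj.sdiff_eq_left, add_le_add_iff_left] at hle

lemma IsMinBasis.deleteElem (he : e ∈ M.E) (hT : IsMinBasis M (update w e c) T) (heT : e ∉ T) :
    IsMinBasis (M ＼ {e}) w T := by
  have hD : M.Coindep {e} :=
    coindep_iff_subset_compl_isBase.2 ⟨T, hT.1, singleton_subset_iff.2 ⟨he, heT⟩⟩
  refine ⟨hD.delete_isBase_iff.2 ⟨hT.1, disjoint_singleton_right.2 heT⟩, fun B hB ↦ ?_⟩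
  obtain ⟨hB, hdisj⟩ := hD.delete_isBase_iff.1 hB
  have hle := hT.2 B hB
  rwa [setWeight_update_of_notMem heT, setWeight_update_of_notMem
    (disjoint_singleton_right.1 hdisj)] at hle

end IsMinBasis

/-- `Blue M A f` and `Red M A f` are the cases `P = (f ∈ ·)` and `P = (f ∉ ·)`. -/
def HasMinBasisWith (M : Matroid α) (A : α → Set ℝ) (P : Set α → Prop) : Prop :=
  ∀ w, Realization M A w → ∃ T, IsMinBasis M w T ∧ P T

section HasMinBasisWith

variable {M : Matroid α} {A : α → Set ℝ} {P : Set α → Prop} {e : α} {a b : ℝ}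

lemma HasMinBasisWith.contractElem_of_blue (h : HasMinBasisWith M A P) (hE : M.E.Finite)
    (ha : a ∈ A e) (hb : b ∈ A e) (hab : a < b) (he : Blue M A e)
    (hP : ∀ T, P T → P (T \ {e})) : HasMinBasisWith (M ／ {e}) A P := by
  classical
  intro w hw
  obtain ⟨T', hT', heT'⟩ := he _ (hw.update_of_ground_eq (contract_ground ..) hb)
  obtain ⟨T, hT, hPT⟩ := h _ (hw.update_of_ground_eq (contract_ground ..) ha)
  exact ⟨T \ {e}, hT.contractElem hE (hT.mem_of_update_lt hE hab hT' heT'), hP T hPT⟩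

lemma HasMinBasisWith.deleteElem_of_red (h : HasMinBasisWith M A P) (hE : M.E.Finite)
    (heE : e ∈ M.E) (ha : a ∈ A e) (hb : b ∈ A e) (hab : a < b) (he : Red M A e) :
    HasMinBasisWith (M ＼ {e}) A P := by
  classical
  intro w hw
  obtain ⟨T', hT', heT'⟩ := he _ (hw.update_of_ground_eq (delete_ground ..) ha)
  obtain ⟨T, hT, hPT⟩ := h _ (hw.update_of_ground_eq (delete_ground ..) hb)
  exact ⟨T, hT.deleteElem heE fun heT ↦ heT' (hT'.mem_of_update_lt hE hab hT heT), hPT⟩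

end HasMinBasisWith

theorem color_preserved_minor_general (M : Matroid α) (A : α → Set ℝ)
    (hE : M.E.Finite) (hA : IsAreaFun M A)
    (e : α) (he : e ∈ M.E) (hu : ¬ Certain A e)
    (f : α) (hfe : f ≠ e) :
    (Blue M A e → Blue M A f → Blue (M.con {e}) A f) ∧
    (Blue M A e → Red M A f → Red (M.con {e}) A f) ∧
    (Red M A e → Blue M A f → Blue (M.del {e}) A f) ∧
    (Red M A e → Red M A f → Red (M.del {e}) A f) := by
  obtain ⟨a, ha, b, hb, hab⟩ := exists_lt_of_not_certain (hA e he).1 hu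
  rw [Matroid.con_eq_contract, Matroid.del_eq_delete]
  refine ⟨fun heB hfB ↦ ?_, fun heB hfR ↦ ?_, fun heR hfB ↦ ?_, fun heR hfR ↦ ?_⟩
  · exact HasMinBasisWith.contractElem_of_blue (P := (f ∈ ·)) hfB hE ha hb hab heB
      fun _ hfT ↦ ⟨hfT, hfe⟩
  · exact HasMinBasisWith.contractElem_of_blue (P := (f ∉ ·)) hfR hE ha hb hab heB
      fun _ hfT hfT' ↦ hfT hfT'.1
  · exact HasMinBasisWith.deleteElem_of_red (P := (f ∈ ·)) hfB hE he ha hb hab heR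
  · exact HasMinBasisWith.deleteElem_of_red (P := (f ∉ ·)) hfR hE he ha hb hab heR

/-- Contracting a blue uncertain element or deleting a red uncertain element
preserves the colors of the other elements. -/
theorem color_preserved_minor (M : Matroid α) (A : α → Set ℝ)
    (hE : M.E.Finite) (hA : IsAreaFun M A)
    (e : α) (he : e ∈ M.E) (hu : ¬ Certain A e) (hc : Colored M A e)
    (f : α) (hf : f ∈ M.E) (hfe : f ≠ e) :
    (Blue M A e → Blue M A f → Blue (M.con {e}) A f) ∧
    (Blue M A e → Red M A f → Red (M.con {e}) A f) ∧
    (Red M A e → Blue M A f → Blue (M.del {e}) A f) ∧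
    (Red M A e → Red M A f → Red (M.del {e}) A f) :=
  color_preserved_minor_general M A hE hA e he hu f hfe
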